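/- arXiv:1611.01429 — 6 statements merged into one kernel-verified Lean document; each statement's English description precedes it below -/
import Mathlib

section
/- For every formula φ ∈ Fm, ⊢_{EL3⁻} □φ ↔ (φ ≡ ⊤). -/
/-- Formulas of the modal-epistemic language: variables, ⊥, ∧, ∨, →, □, K. -/
inductive Fm : Type
  | var : ℕ → Fm
  | bot : Fm
  | and : Fm → Fm → Fm
  | or : Fm → Fm → Fm
  | imp : Fm → Fm → Fm
  | box : Fm → Fm
  | k : Fm → Fm
  deriving DecidableEq

namespace Fm

/-- ¬φ := φ → ⊥ -/
def neg (φ : Fm) : Fm := φ.imp .bot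

/-- ⊤ := ¬⊥ -/
def top : Fm := neg .bot

/-- φ ↔ ψ := (φ→ψ) ∧ (ψ→φ) -/
def iff (φ ψ : Fm) : Fm := (φ.imp ψ).and (ψ.imp φ)

/-- Propositional identity φ ≡ ψ := □(φ→ψ) ∧ □(ψ→φ). -/
def ident (φ ψ : Fm) : Fm := ((φ.imp ψ).box).and ((ψ.imp φ).box)

/-- Substitution of `σ` for every occurrence of the variable `x`. -/
def subst (x : ℕ) (σ : Fm) : Fm → Fm
  | var n => if n = x then σ else var n
  | bot => bot
  | and a b => and (subst x σ a) (subst x σ b)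
  | or a b => or (subst x σ a) (subst x σ b)
  | imp a b => imp (subst x σ a) (subst x σ b)
  | box a => box (subst x σ a)
  | k a => k (subst x σ a)

/-- Propositional formulas (the set Fm₀): neither □ nor K occurs. -/
def IsProp : Fm → Prop
  | var _ => True
  | bot => True
  | and a b => a.IsProp ∧ b.IsProp
  | or a b => a.IsProp ∧ b.IsProp
  | imp a b => a.IsProp ∧ b.IsProp
  | box _ => False
  | k _ => False

end Fm

/-- Hilbert-style axiom schemes of intuitionistic propositional logic, with
schematic letters ranging over all formulas of `Fm` (so the derivable formulas
are exactly the substitution instances of IPC theorems). -/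
inductive IntAx : Fm → Prop
  | k (φ ψ : Fm) : IntAx (φ.imp (ψ.imp φ))
  | s (φ ψ χ : Fm) : IntAx ((φ.imp (ψ.imp χ)).imp ((φ.imp ψ).imp (φ.imp χ)))
  | andIntro (φ ψ : Fm) : IntAx (φ.imp (ψ.imp (φ.and ψ)))
  | andLeft (φ ψ : Fm) : IntAx ((φ.and ψ).imp φ)
  | andRight (φ ψ : Fm) : IntAx ((φ.and ψ).imp ψ)
  | orInl (φ ψ : Fm) : IntAx (φ.imp (φ.or ψ))
  | orInr (φ ψ : Fm) : IntAx (ψ.imp (φ.or ψ))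
  | orElim (φ ψ χ : Fm) : IntAx ((φ.imp χ).imp ((ψ.imp χ).imp ((φ.or ψ).imp χ)))
  | exfalso (φ : Fm) : IntAx (Fm.bot.imp φ)

/-- Derivability in intuitionistic propositional calculus from hypotheses `Φ`
(Hilbert style, Modus Ponens as the only rule). -/
inductive IPC (Φ : Set Fm) : Fm → Prop
  | hyp {φ} : φ ∈ Φ → IPC Φ φ
  | ax {φ} : IntAx φ → IPC Φ φ
  | mp {φ ψ} : IPC Φ (φ.imp ψ) → IPC Φ φ → IPC Φ ψ

/-- The modal logics L3, EL3⁻ (written `EL3m`), EL3, EL4, EL5. -/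
inductive ModalLogic : Type
  | L3 | EL3m | EL3 | EL4 | EL5
  deriving DecidableEq

/-- The axioms of the logic `L`:
(INT) all theorems of IPC and their substitution instances,
(A1) □(φ∨ψ)→(□φ∨□ψ), (A2) □φ→φ, (A3) □(φ→ψ)→□(□φ→□ψ);
(A7) □φ→□Kφ for the epistemic logics EL3⁻, EL3, EL4, EL5;
(A8) Kφ→¬¬φ for EL3, EL4, EL5; (A4) □φ→□□φ for EL4, EL5;
(A5) ¬□φ→□¬□φ for EL5. -/
inductive IsAxiom : ModalLogic → Fm → Prop
  | int {L : ModalLogic} {φ : Fm} : IPC ∅ φ → IsAxiom L φ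
  | a1 (L : ModalLogic) (φ ψ : Fm) :
      IsAxiom L (((φ.or ψ).box).imp ((φ.box).or (ψ.box)))
  | a2 (L : ModalLogic) (φ : Fm) : IsAxiom L ((φ.box).imp φ)
  | a3 (L : ModalLogic) (φ ψ : Fm) :
      IsAxiom L (((φ.imp ψ).box).imp (((φ.box).imp (ψ.box)).box))
  | a7 {L : ModalLogic} (φ : Fm) : L ≠ ModalLogic.L3 →
      IsAxiom L ((φ.box).imp ((φ.k).box))
  | a8 {L : ModalLogic} (φ : Fm) :
      L = ModalLogic.EL3 ∨ L = ModalLogic.EL4 ∨ L = ModalLogic.EL5 →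
      IsAxiom L ((φ.k).imp (φ.neg.neg))
  | a4 {L : ModalLogic} (φ : Fm) :
      L = ModalLogic.EL4 ∨ L = ModalLogic.EL5 →
      IsAxiom L ((φ.box).imp (φ.box.box))
  | a5 {L : ModalLogic} (φ : Fm) : L = ModalLogic.EL5 →
      IsAxiom L ((φ.box.neg).imp (φ.box.neg.box))

/-- Derivability from hypotheses `Φ` in logic `L`: hypotheses, axioms, the
theorem scheme (T) of tertium non datur, Modus Ponens, and Axiom Necessitation
(applicable only to axioms). -/
inductive Deriv (L : ModalLogic) (Φ : Set Fm) : Fm → Prop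
  | hyp {φ} : φ ∈ Φ → Deriv L Φ φ
  | ax {φ} : IsAxiom L φ → Deriv L Φ φ
  | tnd (φ : Fm) : Deriv L Φ (φ.or φ.neg)
  | mp {φ ψ} : Deriv L Φ (φ.imp ψ) → Deriv L Φ φ → Deriv L Φ ψ
  | an {φ} : IsAxiom L φ → Deriv L Φ (φ.box)

/-- ⊢_L φ : theoremhood in logic `L`. -/
def Thm (L : ModalLogic) (φ : Fm) : Prop := Deriv L ∅ φ

/-! Axioms A3 and A2 together give the distribution law □(a → b) → (□a → □b). Necessitation
applied to the axioms ⊤, φ → ⊤ and φ → (⊤ → φ) then yields □(φ → ⊤) outright, □φ → □(⊤ → φ) by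
distribution, and conversely □φ from □(⊤ → φ) and □⊤. -/

theorem IPC.top : IPC ∅ Fm.top :=
  IPC.ax (IntAx.exfalso Fm.bot)

namespace Deriv

variable {L : ModalLogic} {Φ : Set Fm}

theorem intAx {φ : Fm} (h : IntAx φ) : Deriv L Φ φ :=
  ax (IsAxiom.int (IPC.ax h))

theorem weaken {a b : Fm} (hb : Deriv L Φ b) : Deriv L Φ (a.imp b) :=
  mp (intAx (IntAx.k b a)) hb

theorem imp_mp {a b c : Fm} (h : Deriv L Φ (a.imp (b.imp c))) (hb : Deriv L Φ (a.imp b)) :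
    Deriv L Φ (a.imp c) :=
  mp (mp (intAx (IntAx.s a b c)) h) hb

theorem imp_trans {a b c : Fm} (hab : Deriv L Φ (a.imp b)) (hbc : Deriv L Φ (b.imp c)) :
    Deriv L Φ (a.imp c) :=
  imp_mp (weaken hbc) hab

theorem and_intro {x y : Fm} (hx : Deriv L Φ x) (hy : Deriv L Φ y) : Deriv L Φ (x.and y) :=
  mp (mp (intAx (IntAx.andIntro x y)) hx) hy

theorem imp_and {a x y : Fm} (hx : Deriv L Φ (a.imp x)) (hy : Deriv L Φ (a.imp y)) :
    Deriv L Φ (a.imp (x.and y)) :=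
  imp_mp (imp_trans hx (intAx (IntAx.andIntro x y))) hy

theorem box_imp_distrib (a b : Fm) : Deriv L Φ ((a.imp b).box.imp (a.box.imp b.box)) :=
  imp_trans (ax (IsAxiom.a3 L a b)) (ax (IsAxiom.a2 L (a.box.imp b.box)))

theorem box_imp_box {a b : Fm} (h : IsAxiom L (a.imp b)) : Deriv L Φ (a.box.imp b.box) :=
  mp (box_imp_distrib a b) (an h)

end Deriv

theorem box_iff_ident_top (L : ModalLogic) (φ : Fm) : Thm L (φ.box.iff (φ.ident Fm.top)) := by
  have boxTop : Thm L Fm.top.box := Deriv.an (IsAxiom.int IPC.top)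
  have boxImpTop : Thm L (φ.imp Fm.top).box :=
    Deriv.an (IsAxiom.int (IPC.mp (IPC.ax (IntAx.k Fm.top φ)) IPC.top))
  have forward : Thm L (φ.box.imp (Fm.top.imp φ).box) :=
    Deriv.box_imp_box (IsAxiom.int (IPC.ax (IntAx.k φ Fm.top)))
  have backward : Thm L ((Fm.top.imp φ).box.imp φ.box) :=
    Deriv.imp_mp (Deriv.box_imp_distrib Fm.top φ) (Deriv.weaken boxTop)
  exact Deriv.and_intro (Deriv.imp_and (Deriv.weaken boxImpTop) forward)
    (Deriv.imp_trans (Deriv.intAx (IntAx.andRight _ _)) backward)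

/-- ⊢_{EL3⁻} □φ ↔ (φ ≡ ⊤). -/
theorem stmt_1 (φ : Fm) :
    Thm ModalLogic.EL3m ((φ.box).iff (Fm.ident φ Fm.top)) :=
  box_iff_ident_top ModalLogic.EL3m φ
end

section
/- EL3 has classical reflection: for every formula φ ∈ Fm, ⊢_{EL3} Kφ → φ. -/
/-!
Axiom (A8) gives `Kφ → ¬¬φ`, and the theorem scheme (T) gives `φ ∨ ¬φ`; intuitionistically,
a decidable formula is stable under double negation, so `Kφ → φ` follows in IPC from these two.
-/

namespace IPC

variable {Φ Ψ : Set Fm}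

theorem imp_self (a : Fm) : IPC Φ (a.imp a) :=
  mp (mp (ax (.s a (a.imp a) a)) (ax (.k a (a.imp a)))) (ax (.k a a))

theorem mono (hΦΨ : Φ ⊆ Ψ) {a : Fm} (h : IPC Φ a) : IPC Ψ a := by
  induction h with
  | hyp hm => exact hyp (hΦΨ hm)
  | ax hax => exact ax hax
  | mp _ _ ih₁ ih₂ => exact mp ih₁ ih₂

theorem deduction {a b : Fm} (h : IPC (insert a Φ) b) : IPC Φ (a.imp b) := by
  induction h with
  | hyp hm =>
    rcases hm with rfl | hm
    · exact imp_self _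
    · exact mp (ax (.k _ a)) (hyp hm)
  | ax hax => exact mp (ax (.k _ a)) (ax hax)
  | mp _ _ ih₁ ih₂ => exact mp (mp (ax (.s a _ _)) ih₁) ih₂

theorem or_elim {a b c : Fm} (hac : IPC Φ (a.imp c)) (hbc : IPC Φ (b.imp c))
    (hab : IPC Φ (a.or b)) : IPC Φ c :=
  mp (mp (mp (ax (.orElim a b c)) hac) hbc) hab

theorem absurd {a b : Fm} (hna : IPC Φ a.neg) (ha : IPC Φ a) : IPC Φ b :=
  mp (ax (.exfalso b)) (mp hna ha)

theorem imp_of_imp_not_not_of_em (a b : Fm) :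
    IPC Φ ((a.imp b.neg.neg).imp ((b.or b.neg).imp (a.imp b))) := by
  refine deduction (deduction (deduction ?_))
  have hnnb : IPC (insert a (insert (b.or b.neg) (insert (a.imp b.neg.neg) Φ))) b.neg.neg :=
    mp (hyp (φ := a.imp b.neg.neg) (by simp)) (hyp (φ := a) (by simp))
  refine or_elim (imp_self b) (deduction ?_) (hyp (φ := b.or b.neg) (by simp))
  exact absurd (mono (Set.subset_insert _ _) hnnb) (hyp (by simp))

end IPC

/-- classical reflection, ⊢_{EL3} Kφ → φ. -/
theorem stmt_2 (φ : Fm) : Thm ModalLogic.EL3 ((φ.k).imp φ) :=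
  have k_imp_not_not : Thm .EL3 (φ.k.imp φ.neg.neg) := .ax (.a8 φ (.inl rfl))
  .mp (.mp (.ax (.int (IPC.imp_of_imp_not_not_of_em φ.k φ))) k_imp_not_not) (.tnd φ)
end

section
/- For every formula φ ∈ Fm, ⊢_{EL3⁻} □¬□Kφ → □¬□φ. -/
/-
The contrapositive of the necessitated axiom (A7), □(□φ → □Kφ), is
□(¬□Kφ → ¬□φ); distributing □ over this implication gives the claim. In a logic
where necessitation applies to axioms only, distribution over a derived
□(p → q) is obtained from (A3), □(p → q) → □(□p → □q), followed by (A2).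
-/

namespace IPC

variable {Φ : Set Fm}

theorem imp_self_s4 (φ : Fm) : IPC Φ (φ.imp φ) :=
  mp (mp (ax (IntAx.s φ (φ.imp φ) φ)) (ax (IntAx.k φ (φ.imp φ)))) (ax (IntAx.k φ φ))

theorem imp_intro {φ ψ : Fm} (h : IPC (insert φ Φ) ψ) : IPC Φ (φ.imp ψ) := by
  induction h with
  | hyp h =>
      rcases h with rfl | h
      · exact imp_self_s4 _
      · exact mp (ax (IntAx.k _ φ)) (hyp h)
  | ax a => exact mp (ax (IntAx.k _ φ)) (ax a)
  | mp _ _ ih₁ ih₂ => exact mp (mp (ax (IntAx.s φ _ _)) ih₁) ih₂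

theorem contrapose (p q : Fm) : IPC Φ ((p.imp q).imp (q.neg.imp p.neg)) := by
  refine imp_intro (imp_intro (imp_intro ?_))
  exact mp (φ := q) (hyp (by simp [Fm.neg])) (mp (φ := p) (hyp (by simp)) (hyp (by simp)))

end IPC

namespace Deriv

variable {L : ModalLogic} {Φ : Set Fm} {p q : Fm}

theorem box_imp_box_s4 (h : Deriv L Φ (p.imp q).box) : Deriv L Φ (p.box.imp q.box) :=
  mp (ax (IsAxiom.a2 L _)) (mp (ax (IsAxiom.a3 L p q)) h)

theorem box_contrapose (h : Deriv L Φ (p.imp q).box) : Deriv L Φ (q.neg.imp p.neg).box :=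
  mp (box_imp_box_s4 (an (IsAxiom.int (IPC.contrapose p q)))) h

end Deriv

/-- ⊢_{EL3⁻} □¬□Kφ → □¬□φ. -/
theorem stmt_4 (φ : Fm) :
    Thm ModalLogic.EL3m ((φ.k.box.neg.box).imp (φ.box.neg.box)) :=
  (Deriv.an (IsAxiom.a7 φ (by decide))).box_contrapose.box_imp_box_s4
end

section
/- For every formula φ ∈ Fm, ⊢_{EL5} ¬□φ → K¬□φ. -/
theorem Deriv.imp_trans_s6 {L : ModalLogic} {Φ : Set Fm} {φ ψ χ : Fm}
    (hφψ : Deriv L Φ (φ.imp ψ)) (hψχ : Deriv L Φ (ψ.imp χ)) : Deriv L Φ (φ.imp χ) :=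
  have hk : Deriv L Φ ((ψ.imp χ).imp (φ.imp (ψ.imp χ))) := .ax (.int (.ax (.k _ _)))
  have hs : Deriv L Φ ((φ.imp (ψ.imp χ)).imp ((φ.imp ψ).imp (φ.imp χ))) :=
    .ax (.int (.ax (.s _ _ _)))
  .mp (.mp hs (.mp hk hψχ)) hφψ

theorem Deriv.box_imp_k {L : ModalLogic} (hL : L ≠ ModalLogic.L3) (Φ : Set Fm) (φ : Fm) :
    Deriv L Φ (φ.box.imp φ.k) :=
  (Deriv.ax (.a7 φ hL)).imp_trans_s6 (.ax (.a2 L φ.k))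

/-- ⊢_{EL5} ¬□φ → K¬□φ. -/
theorem stmt_6 (φ : Fm) :
    Thm ModalLogic.EL5 ((φ.box.neg).imp (φ.box.neg.k)) :=
  (Deriv.ax (.a5 φ rfl)).imp_trans_s6 (Deriv.box_imp_k (by decide) ∅ φ.box.neg)
end

section
/- The scheme Kφ ∨ K¬φ is not derivable in EL5: there exists a formula φ ∈ Fm (e.g., a propositional variable x) such that ⊬_{EL5} Kφ ∨ K¬φ. -/
/-! Every theorem of any of the logics is forced at the top node of the two-node intuitionistic
Kripke model `false ≤ true` in which variables hold only at the top and both `□φ` and `Kφ` mean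
"`φ` is forced at the root". All axioms are forced at both nodes, so Axiom Necessitation is sound,
and excluded middle is forced at the top node because nothing lies above it. At the root neither
`x` nor `¬x` is forced (the latter because `x` holds at the top), so `Kx ∨ K¬x` fails. -/

def Forces : Bool → Fm → Prop
  | w, .var _ => w = true
  | _, .bot => False
  | w, .and a b => Forces w a ∧ Forces w b
  | w, .or a b => Forces w a ∨ Forces w b
  | w, .imp a b => ∀ v, w ≤ v → Forces v a → Forces v b
  | _, .box a => Forces false a
  | _, .k a => Forces false a

theorem Forces.mono {w v : Bool} (hwv : w ≤ v) : ∀ {φ : Fm}, Forces w φ → Forces v φ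
  | .var _, hw => by subst hw; exact top_le_iff.mp hwv
  | .bot, hw => hw
  | .and _ _, ⟨ha, hb⟩ => ⟨Forces.mono hwv ha, Forces.mono hwv hb⟩
  | .or _ _, .inl ha => .inl (Forces.mono hwv ha)
  | .or _ _, .inr hb => .inr (Forces.mono hwv hb)
  | .imp _ _, hw => fun u hvu => hw u (hwv.trans hvu)
  | .box _, hw => hw
  | .k _, hw => hw

theorem IntAx.forces {φ : Fm} (h : IntAx φ) (w : Bool) : Forces w φ := by
  cases h with
  | k => exact fun v _ ha u hvu _ => ha.mono hvu
  | s =>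
      exact fun v _ h₁ u hvu h₂ t hut ha => h₁ t (hvu.trans hut) ha t le_rfl (h₂ t hut ha)
  | andIntro => exact fun v _ ha u hvu hb => ⟨ha.mono hvu, hb⟩
  | andLeft => exact fun _ _ h => h.1
  | andRight => exact fun _ _ h => h.2
  | orInl => exact fun _ _ => .inl
  | orInr => exact fun _ _ => .inr
  | orElim =>
      exact fun v _ h₁ u hvu h₂ t hut hor => hor.elim (h₁ t (hvu.trans hut)) (h₂ t hut)
  | exfalso => exact fun _ _ h => h.elim

theorem IPC.forces {φ : Fm} (h : IPC ∅ φ) (w : Bool) : Forces w φ := by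
  induction h generalizing w with
  | hyp h => exact (Set.notMem_empty _ h).elim
  | ax h => exact h.forces w
  | mp _ _ ih₁ ih₂ => exact ih₁ w w le_rfl (ih₂ w)

theorem IsAxiom.forces {L : ModalLogic} {φ : Fm} (h : IsAxiom L φ) (w : Bool) : Forces w φ := by
  cases h with
  | int h => exact h.forces w
  | a1 => exact fun _ _ h => h
  | a2 => exact fun v _ h => h.mono (Bool.false_le v)
  | a3 => exact fun _ _ h _ _ hb => h false le_rfl hb
  | a7 => exact fun _ _ h => h
  | a8 =>
      exact fun _ _ h u _ hn => hn true (Bool.le_true u) (h.mono (Bool.false_le true))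
  | a4 => exact fun _ _ h => h
  | a5 => exact fun v _ h _ _ hb => h v le_rfl hb

theorem forces_true_em (φ : Fm) : Forces true (φ.or φ.neg) := by
  by_cases hφ : Forces true φ
  · exact .inl hφ
  · refine .inr fun v hv ha => ?_
    obtain rfl : v = true := top_le_iff.mp hv
    exact hφ ha

theorem Thm.forces_true {L : ModalLogic} {φ : Fm} (h : Thm L φ) : Forces true φ := by
  induction h with
  | hyp h => exact (Set.notMem_empty _ h).elim
  | ax h => exact h.forces true
  | tnd φ => exact forces_true_em φ
  | mp _ _ ih₁ ih₂ => exact ih₁ true le_rfl ih₂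
  | an h => exact h.forces false

/-- the scheme Kφ ∨ K¬φ is not derivable in EL5. -/
theorem stmt_15 : ∃ φ : Fm, ¬ Thm ModalLogic.EL5 ((φ.k).or (φ.neg.k)) := by
  refine ⟨.var 0, fun h => ?_⟩
  rcases h.forces_true with hx | hnx
  · exact Bool.false_ne_true hx
  · exact hnx true (Bool.le_true false) rfl
end

section
/- Algebraic soundness and completeness of Intuitionistic Epistemic Logic: for every formula φ ∈ Fm_e, φ is a theorem of IEL⁻ if and only if φ is valid in all IEL⁻-models, and φ is a theorem of IEL if and only if φ is valid in all IEL-models. -/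
/-- Formulas of the epistemic language Fm_e: variables, ⊥, ∧, ∨, →, K (no □). -/
inductive FmE : Type
  | var : ℕ → FmE
  | bot : FmE
  | and : FmE → FmE → FmE
  | or : FmE → FmE → FmE
  | imp : FmE → FmE → FmE
  | k : FmE → FmE
  deriving DecidableEq

namespace FmE

/-- ¬φ := φ → ⊥ -/
def neg (φ : FmE) : FmE := φ.imp .bot

end FmE

/-- Hilbert-style axiom schemes of intuitionistic propositional logic, with
schematic letters ranging over all formulas of `FmE` (so all substitution
instances of IPC theorems are obtained by Modus Ponens). -/
inductive IntAxE : FmE → Prop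
  | k (φ ψ : FmE) : IntAxE (φ.imp (ψ.imp φ))
  | s (φ ψ χ : FmE) : IntAxE ((φ.imp (ψ.imp χ)).imp ((φ.imp ψ).imp (φ.imp χ)))
  | andIntro (φ ψ : FmE) : IntAxE (φ.imp (ψ.imp (φ.and ψ)))
  | andLeft (φ ψ : FmE) : IntAxE ((φ.and ψ).imp φ)
  | andRight (φ ψ : FmE) : IntAxE ((φ.and ψ).imp ψ)
  | orInl (φ ψ : FmE) : IntAxE (φ.imp (φ.or ψ))
  | orInr (φ ψ : FmE) : IntAxE (ψ.imp (φ.or ψ))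
  | orElim (φ ψ χ : FmE) : IntAxE ((φ.imp χ).imp ((ψ.imp χ).imp ((φ.or ψ).imp χ)))
  | exfalso (φ : FmE) : IntAxE (FmE.bot.imp φ)

/-- Theorems of IEL⁻ (`full = false`) and of IEL (`full = true`):
substitution instances of IPC theorems, K-distribution, intuitionistic
co-reflection φ→Kφ, for IEL additionally intuitionistic reflection Kφ→¬¬φ;
the only inference rule is Modus Ponens. -/
inductive IELThm : Bool → FmE → Prop
  | int {full : Bool} {φ : FmE} : IntAxE φ → IELThm full φ
  | dist (full : Bool) (φ ψ : FmE) :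
      IELThm full (((φ.imp ψ).k).imp ((φ.k).imp (ψ.k)))
  | coref (full : Bool) (φ : FmE) : IELThm full (φ.imp (φ.k))
  | intref (φ : FmE) : IELThm true ((φ.k).imp (φ.neg.neg))
  | mp {full : Bool} {φ ψ : FmE} :
      IELThm full (φ.imp ψ) → IELThm full φ → IELThm full ψ

/-- An IEL⁻-model: a Heyting algebra with a set `BEL` and an operation `fK`
satisfying truth conditions (i)-(v). -/
structure IELModel (M : Type) [HeytingAlgebra M] where
  BEL : Set M
  fK : M → M
  cond1 : (⊤ : M) ∈ BEL
  cond2 : ∀ m : M, fK m = ⊤ ↔ m ∈ BEL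
  cond3 : ∀ m : M, m ≤ fK m
  cond4 : ∀ m m' : M, fK (m ⇨ m') ≤ fK m ⇨ fK m'
  cond5 : ∀ m m' : M, m ⊔ m' = ⊤ → m = ⊤ ∨ m' = ⊤

/-- An IEL-model is an IEL⁻-model additionally satisfying f_K(m) ≤ ¬¬m. -/
def IsIELModel {M : Type} [HeytingAlgebra M] (Mo : IELModel M) : Prop :=
  ∀ m : M, Mo.fK m ≤ mᶜᶜ

/-- Canonical extension of an assignment `γ` of the variables to all formulas. -/
def IELModel.eval {M : Type} [HeytingAlgebra M] (Mo : IELModel M) (γ : ℕ → M) :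
    FmE → M
  | .var n => γ n
  | .bot => ⊥
  | .and a b => Mo.eval γ a ⊓ Mo.eval γ b
  | .or a b => Mo.eval γ a ⊔ Mo.eval γ b
  | .imp a b => Mo.eval γ a ⇨ Mo.eval γ b
  | .k a => Mo.fK (Mo.eval γ a)

/-- Validity in all IEL⁻-models: γ(φ) = ⊤ under every assignment in every model. -/
def ValidIELm (φ : FmE) : Prop :=
  ∀ (M : Type) [HeytingAlgebra M] (Mo : IELModel M) (γ : ℕ → M),
    Mo.eval γ φ = ⊤

/-- Validity in all IEL-models. -/
def ValidIEL (φ : FmE) : Prop :=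
  ∀ (M : Type) [HeytingAlgebra M] (Mo : IELModel M), IsIELModel Mo →
    ∀ γ : ℕ → M, Mo.eval γ φ = ⊤

/-!
Soundness is an induction on derivations: each axiom evaluates to `⊤` in every Heyting algebra
satisfying (iii)-(iv) (and the reflection bound for IEL), and `⊤` is closed under modus ponens.

For completeness, extend the IEL⁻/IEL theorems by Zorn's lemma to a set `Γ` maximal among those
not deriving a given unprovable `φ`; such a `Γ` is a prime theory. Formulas modulo provable
equivalence *relative to `Γ`* form a Heyting algebra whose top element is exactly `Γ`, so the
primeness of `Γ` is condition (v). Taking `f_K` induced by `K` and `BEL := {m | f_K m = ⊤}`,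
co-reflection and distribution give (i)-(iv), reflection gives the IEL condition, and under the
canonical assignment every formula evaluates to its own class, so `φ` is refuted.
-/

section Soundness

variable {M : Type} [HeytingAlgebra M] (Mo : IELModel M) (γ : ℕ → M)

theorem IntAxE.eval_eq_top {φ : FmE} (h : IntAxE φ) : Mo.eval γ φ = ⊤ := by
  cases h <;> simp only [IELModel.eval, himp_eq_top_iff, le_himp_iff]
  case k => exact inf_le_left
  case s => rw [← himp_inf_distrib]; exact himp_inf_le.trans himp_inf_le
  case andIntro => exact le_rfl
  case andLeft => exact inf_le_left
  case andRight => exact inf_le_right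
  case orInl => exact le_sup_left
  case orInr => exact le_sup_right
  case orElim => rw [← sup_himp_distrib]; exact himp_inf_le
  case exfalso => exact bot_le

theorem IELThm.eval_eq_top {b : Bool} {φ : FmE} (h : IELThm b φ)
    (hb : b = true → IsIELModel Mo) : Mo.eval γ φ = ⊤ := by
  induction h with
  | int h => exact h.eval_eq_top Mo γ
  | dist => exact himp_eq_top_iff.2 (Mo.cond4 _ _)
  | coref => exact himp_eq_top_iff.2 (Mo.cond3 _)
  | intref =>
    simpa only [IELModel.eval, FmE.neg, himp_bot, himp_eq_top_iff] using hb rfl _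
  | mp _ _ ihψ ihφ => exact eq_top_iff.2 ((ihφ hb).ge.trans (himp_eq_top_iff.1 (ihψ hb)))

end Soundness

namespace IEL

inductive Deriv (b : Bool) (Γ : Set FmE) : FmE → Prop
  | hyp {φ : FmE} : φ ∈ Γ → Deriv b Γ φ
  | thm {φ : FmE} : IELThm b φ → Deriv b Γ φ
  | mp {φ ψ : FmE} : Deriv b Γ (φ.imp ψ) → Deriv b Γ φ → Deriv b Γ ψ

namespace Deriv

variable {b : Bool} {Γ Δ : Set FmE} {φ ψ χ : FmE}

theorem ax (h : IntAxE φ) : Deriv b Γ φ := thm (.int h)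

theorem mp₂ (h : Deriv b Γ (φ.imp (ψ.imp χ))) (hφ : Deriv b Γ φ) (hψ : Deriv b Γ ψ) :
    Deriv b Γ χ :=
  mp (mp h hφ) hψ

theorem imp_self : Deriv b Γ (φ.imp φ) :=
  mp₂ (ax (.s φ (φ.imp φ) φ)) (ax (.k φ (φ.imp φ))) (ax (.k φ φ))

theorem head : Deriv b (insert φ Γ) φ := hyp (Set.mem_insert φ Γ)

theorem mono (hΓΔ : Γ ⊆ Δ) (h : Deriv b Γ φ) : Deriv b Δ φ := by
  induction h with
  | hyp hφ => exact hyp (hΓΔ hφ)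
  | thm h => exact thm h
  | mp _ _ ihψ ihφ => exact mp ihψ ihφ

theorem weaken (h : Deriv b Γ ψ) : Deriv b (insert φ Γ) ψ :=
  mono (Set.subset_insert φ Γ) h

theorem deduction (h : Deriv b (insert φ Γ) ψ) : Deriv b Γ (φ.imp ψ) := by
  induction h with
  | hyp hψ =>
    rcases Set.mem_insert_iff.mp hψ with rfl | hψ
    · exact imp_self
    · exact mp (ax (.k _ _)) (hyp hψ)
  | thm h => exact mp (ax (.k _ _)) (thm h)
  | mp _ _ ihψ ihφ => exact mp₂ (ax (.s _ _ _)) ihψ ihφ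

theorem ielThm_of_empty (h : Deriv b ∅ φ) : IELThm b φ := by
  induction h with
  | hyp hφ => exact absurd hφ (Set.notMem_empty _)
  | thm h => exact h
  | mp _ _ ihψ ihφ => exact .mp ihψ ihφ

theorem exists_of_sUnion {c : Set (Set FmE)} (hc : IsChain (· ⊆ ·) c) (hne : c.Nonempty)
    (h : Deriv b (⋃₀ c) φ) : ∃ Γ ∈ c, Deriv b Γ φ := by
  induction h with
  | hyp hφ =>
    obtain ⟨Γ, hΓ, hφ⟩ := hφ
    exact ⟨Γ, hΓ, hyp hφ⟩
  | thm h => exact ⟨hne.some, hne.some_mem, thm h⟩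
  | mp _ _ ihψ ihφ =>
    obtain ⟨Γ₁, hΓ₁, h₁⟩ := ihψ
    obtain ⟨Γ₂, hΓ₂, h₂⟩ := ihφ
    rcases hc.total hΓ₁ hΓ₂ with hsub | hsub
    · exact ⟨Γ₂, hΓ₂, mp (mono hsub h₁) h₂⟩
    · exact ⟨Γ₁, hΓ₁, mp h₁ (mono hsub h₂)⟩

end Deriv

structure PrimeTheory (b : Bool) where
  carrier : Set FmE
  mem_of_deriv' : ∀ {φ : FmE}, Deriv b carrier φ → φ ∈ carrier
  mem_or_mem' : ∀ {φ ψ : FmE}, φ.or ψ ∈ carrier → φ ∈ carrier ∨ ψ ∈ carrier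

namespace PrimeTheory

variable {b : Bool}

instance : SetLike (PrimeTheory b) FmE where
  coe := carrier
  coe_injective T T' h := by cases T; cases T'; congr

variable (T : PrimeTheory b) {φ ψ χ φ' ψ' : FmE}

theorem mem_of_deriv (h : Deriv b T φ) : φ ∈ T := T.mem_of_deriv' h

theorem mem_or_mem (h : φ.or ψ ∈ T) : φ ∈ T ∨ ψ ∈ T := T.mem_or_mem' h

theorem imp_mem_iff : φ.imp ψ ∈ T ↔ Deriv b (insert φ (T : Set FmE)) ψ :=
  ⟨fun h => .mp (.weaken (.hyp h)) .head, fun h => T.mem_of_deriv h.deduction⟩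

theorem thm_mem (h : IELThm b φ) : φ ∈ T := T.mem_of_deriv (.thm h)

theorem mem_of_imp_mem (h : φ.imp ψ ∈ T) (hφ : φ ∈ T) : ψ ∈ T :=
  T.mem_of_deriv (.mp (.hyp h) (.hyp hφ))

theorem imp_self_mem : φ.imp φ ∈ T := T.mem_of_deriv .imp_self

theorem imp_mem_of_mem (h : ψ ∈ T) : φ.imp ψ ∈ T := T.imp_mem_iff.2 (.weaken (.hyp h))

theorem imp_trans (h₁ : φ.imp ψ ∈ T) (h₂ : ψ.imp χ ∈ T) : φ.imp χ ∈ T := by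
  rw [imp_mem_iff] at h₁ ⊢
  exact .mp (.weaken (.hyp h₂)) h₁

theorem imp_and (h₁ : φ.imp ψ ∈ T) (h₂ : φ.imp χ ∈ T) : φ.imp (ψ.and χ) ∈ T := by
  rw [imp_mem_iff] at h₁ h₂ ⊢
  exact .mp₂ (.ax (.andIntro ψ χ)) h₁ h₂

theorem or_imp (h₁ : φ.imp χ ∈ T) (h₂ : ψ.imp χ ∈ T) : (φ.or ψ).imp χ ∈ T :=
  T.mem_of_deriv (.mp₂ (.ax (.orElim φ ψ χ)) (.hyp h₁) (.hyp h₂))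

theorem imp_imp_mem_iff : φ.imp (ψ.imp χ) ∈ T ↔ (φ.and ψ).imp χ ∈ T := by
  rw [imp_mem_iff, imp_mem_iff]
  constructor
  · intro h
    exact .mp₂ h.deduction.weaken (.mp (.ax (.andLeft φ ψ)) .head)
      (.mp (.ax (.andRight φ ψ)) .head)
  · intro h
    refine Deriv.deduction (.mp h.deduction.weaken.weaken ?_)
    exact .mp₂ (.ax (.andIntro φ ψ)) (.weaken .head) .head

theorem and_imp_and (h₁ : φ.imp φ' ∈ T) (h₂ : ψ.imp ψ' ∈ T) :
    (φ.and ψ).imp (φ'.and ψ') ∈ T :=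
  T.imp_and (T.imp_trans (T.thm_mem (.int (.andLeft φ ψ))) h₁)
    (T.imp_trans (T.thm_mem (.int (.andRight φ ψ))) h₂)

theorem or_imp_or (h₁ : φ.imp φ' ∈ T) (h₂ : ψ.imp ψ' ∈ T) :
    (φ.or ψ).imp (φ'.or ψ') ∈ T :=
  T.or_imp (T.imp_trans h₁ (T.thm_mem (.int (.orInl φ' ψ'))))
    (T.imp_trans h₂ (T.thm_mem (.int (.orInr φ' ψ'))))

theorem imp_imp_imp (h₁ : φ'.imp φ ∈ T) (h₂ : ψ.imp ψ' ∈ T) :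
    (φ.imp ψ).imp (φ'.imp ψ') ∈ T :=
  T.imp_imp_mem_iff.2 <| T.imp_trans (T.and_imp_and T.imp_self_mem h₁) <|
    T.imp_trans (T.imp_imp_mem_iff.1 T.imp_self_mem) h₂

theorem k_imp_k (h : φ.imp ψ ∈ T) : φ.k.imp ψ.k ∈ T :=
  T.mem_of_imp_mem (T.thm_mem (.dist b φ ψ)) (T.mem_of_imp_mem (T.thm_mem (.coref b _)) h)

def setoid : Setoid FmE where
  r φ ψ := φ.imp ψ ∈ T ∧ ψ.imp φ ∈ T
  iseqv := ⟨fun _ => ⟨T.imp_self_mem, T.imp_self_mem⟩, fun h => ⟨h.2, h.1⟩,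
    fun h₁ h₂ => ⟨T.imp_trans h₁.1 h₂.1, T.imp_trans h₂.2 h₁.2⟩⟩

def Lindenbaum : Type := Quotient T.setoid

def quot (φ : FmE) : T.Lindenbaum := Quotient.mk T.setoid φ

def kOp : T.Lindenbaum → T.Lindenbaum :=
  Quotient.map FmE.k fun _ _ h => ⟨T.k_imp_k h.1, T.k_imp_k h.2⟩

instance : HeytingAlgebra T.Lindenbaum where
  le := Quotient.lift₂ (fun φ ψ => φ.imp ψ ∈ T) fun _ _ _ _ h₁ h₂ =>
    propext ⟨fun h => T.imp_trans h₁.2 (T.imp_trans h h₂.1),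
      fun h => T.imp_trans h₁.1 (T.imp_trans h h₂.2)⟩
  le_refl := by rintro ⟨φ⟩; exact T.imp_self_mem
  le_trans := by rintro ⟨φ⟩ ⟨ψ⟩ ⟨χ⟩; exact T.imp_trans
  le_antisymm := by rintro ⟨φ⟩ ⟨ψ⟩ h₁ h₂; exact Quotient.sound ⟨h₁, h₂⟩
  inf := Quotient.map₂ FmE.and fun _ _ h₁ _ _ h₂ =>
    ⟨T.and_imp_and h₁.1 h₂.1, T.and_imp_and h₁.2 h₂.2⟩
  inf_le_left := by rintro ⟨φ⟩ ⟨ψ⟩; exact T.thm_mem (.int (.andLeft φ ψ))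
  inf_le_right := by rintro ⟨φ⟩ ⟨ψ⟩; exact T.thm_mem (.int (.andRight φ ψ))
  le_inf := by rintro ⟨φ⟩ ⟨ψ⟩ ⟨χ⟩; exact T.imp_and
  sup := Quotient.map₂ FmE.or fun _ _ h₁ _ _ h₂ =>
    ⟨T.or_imp_or h₁.1 h₂.1, T.or_imp_or h₁.2 h₂.2⟩
  le_sup_left := by rintro ⟨φ⟩ ⟨ψ⟩; exact T.thm_mem (.int (.orInl φ ψ))
  le_sup_right := by rintro ⟨φ⟩ ⟨ψ⟩; exact T.thm_mem (.int (.orInr φ ψ))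
  sup_le := by rintro ⟨φ⟩ ⟨ψ⟩ ⟨χ⟩; exact T.or_imp
  himp := Quotient.map₂ FmE.imp fun _ _ h₁ _ _ h₂ =>
    ⟨T.imp_imp_imp h₁.2 h₂.1, T.imp_imp_imp h₁.1 h₂.2⟩
  le_himp_iff := by rintro ⟨φ⟩ ⟨ψ⟩ ⟨χ⟩; exact T.imp_imp_mem_iff
  top := T.quot FmE.bot.neg
  le_top := by rintro ⟨φ⟩; exact T.imp_mem_of_mem T.imp_self_mem
  bot := T.quot FmE.bot
  bot_le := by rintro ⟨φ⟩; exact T.thm_mem (.int (.exfalso φ))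
  compl := Quotient.map FmE.neg fun _ _ h =>
    ⟨T.imp_imp_imp h.2 T.imp_self_mem, T.imp_imp_imp h.1 T.imp_self_mem⟩
  himp_bot := by rintro ⟨φ⟩; rfl

theorem quot_eq_top_iff : T.quot φ = ⊤ ↔ φ ∈ T :=
  ⟨fun h => T.mem_of_imp_mem (Quotient.exact h).2 T.imp_self_mem,
    fun h => Quotient.sound ⟨T.imp_mem_of_mem T.imp_self_mem, T.imp_mem_of_mem h⟩⟩

def model : IELModel T.Lindenbaum where
  BEL := {m | T.kOp m = ⊤}
  fK := T.kOp
  cond1 := T.quot_eq_top_iff.2 (T.mem_of_imp_mem (T.thm_mem (.coref b _)) T.imp_self_mem)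
  cond2 _ := Iff.rfl
  cond3 := by rintro ⟨φ⟩; exact T.thm_mem (.coref b φ)
  cond4 := by rintro ⟨φ⟩ ⟨ψ⟩; exact T.thm_mem (.dist b φ ψ)
  cond5 := by
    rintro ⟨φ⟩ ⟨ψ⟩ h
    exact (T.mem_or_mem (T.quot_eq_top_iff.1 h)).imp T.quot_eq_top_iff.2 T.quot_eq_top_iff.2

theorem model_isIELModel (T : PrimeTheory true) : IsIELModel T.model := by
  rintro ⟨φ⟩
  exact T.thm_mem (.intref φ)

theorem eval_model_quot (φ : FmE) : T.model.eval (T.quot ∘ .var) φ = T.quot φ := by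
  induction φ with
  | var n => rfl
  | bot => rfl
  | and φ ψ ihφ ihψ => exact congrArg₂ (· ⊓ ·) ihφ ihψ
  | or φ ψ ihφ ihψ => exact congrArg₂ (· ⊔ ·) ihφ ihψ
  | imp φ ψ ihφ ihψ => exact congrArg₂ (· ⇨ ·) ihφ ihψ
  | k φ ihφ => exact congrArg T.kOp ihφ

end PrimeTheory

section Extension

variable {b : Bool} {φ : FmE}

theorem exists_maximal_not_deriv (h : ¬ IELThm b φ) :
    ∃ Γ, Maximal (fun Γ => ¬ Deriv b Γ φ) Γ := by
  refine (zorn_subset_nonempty {Γ | ¬ Deriv b Γ φ} ?_ ∅ fun hφ => h hφ.ielThm_of_empty).imp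
    fun _ hΓ => hΓ.2
  intro c hcS hc hne
  refine ⟨⋃₀ c, fun hφ => ?_, fun _ => Set.subset_sUnion_of_mem⟩
  obtain ⟨Γ, hΓ, hφ⟩ := hφ.exists_of_sUnion hc hne
  exact hcS hΓ hφ

variable {Γ : Set FmE} (hΓ : Maximal (fun Γ => ¬ Deriv b Γ φ) Γ)
include hΓ

theorem deriv_insert_of_not_mem {ψ : FmE} (hψ : ψ ∉ Γ) : Deriv b (insert ψ Γ) φ := by
  by_contra h
  exact hψ (hΓ.2 h (Set.subset_insert ψ Γ) (Set.mem_insert ψ Γ))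

def PrimeTheory.ofMaximal : PrimeTheory b where
  carrier := Γ
  mem_of_deriv' {ψ} hψ := by
    by_contra hψΓ
    exact hΓ.1 (.mp (deriv_insert_of_not_mem hΓ hψΓ).deduction hψ)
  mem_or_mem' {ψ χ} h := by
    by_contra! ⟨hψ, hχ⟩
    exact hΓ.1 (.mp₂ (.mp (.ax (.orElim ψ χ φ)) (deriv_insert_of_not_mem hΓ hψ).deduction)
      (deriv_insert_of_not_mem hΓ hχ).deduction (.hyp h))

end Extension

theorem exists_primeTheory_not_mem {b : Bool} {φ : FmE} (h : ¬ IELThm b φ) :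
    ∃ T : PrimeTheory b, φ ∉ T := by
  obtain ⟨Γ, hΓ⟩ := exists_maximal_not_deriv h
  exact ⟨.ofMaximal hΓ, fun hφ => hΓ.1 (.hyp hφ)⟩

end IEL

theorem IELThm.of_forall_primeTheory {b : Bool} {φ : FmE}
    (h : ∀ T : IEL.PrimeTheory b, T.model.eval (T.quot ∘ .var) φ = ⊤) : IELThm b φ := by
  by_contra hφ
  obtain ⟨T, hT⟩ := IEL.exists_primeTheory_not_mem hφ
  exact hT (T.quot_eq_top_iff.1 (T.eval_model_quot φ ▸ h T))

/-- algebraic soundness and completeness of IEL⁻ and IEL. -/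
theorem stmt_19 (φ : FmE) :
    (IELThm false φ ↔ ValidIELm φ) ∧ (IELThm true φ ↔ ValidIEL φ) :=
  ⟨⟨fun h _ _ Mo γ => h.eval_eq_top Mo γ nofun,
      fun hv => .of_forall_primeTheory fun T => hv _ T.model _⟩,
    ⟨fun h _ _ Mo hMo γ => h.eval_eq_top Mo γ fun _ => hMo,
      fun hv => .of_forall_primeTheory fun T => hv _ T.model T.model_isIELModel _⟩⟩
end
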